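/- Suppose j is a positive even integer and d = p ≥ 1. Then for every x with j/2 + 1 ≤ x ≤ j, P[Bi(j + 2d, 1/2) ≥ x + d] > P[Bi(j, 1/2) ≥ x]. -/

import Mathlib

open Finset

/-- P[Bi(n,p) = k] -/
noncomputable def binomPMF (n k : ℕ) (p : ℝ) : ℝ :=
  (n.choose k : ℝ) * p ^ k * (1 - p) ^ (n - k)

/-- P[Bi(n,p) ≥ k] -/
noncomputable def binomGE (n k : ℕ) (p : ℝ) : ℝ :=
  ∑ m ∈ Finset.Icc k n, binomPMF n m p

/-- Pascal recursion for tail sums of binomial coefficients. -/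
lemma S_pascal (n k : ℕ) :
    ∑ m ∈ Icc (k+1) (n+1), (n+1).choose m
      = (∑ m ∈ Icc (k+1) n, n.choose m) + ∑ m ∈ Icc k n, n.choose m := by
  have h1 : ∑ m ∈ Icc (k+1) (n+1), (n+1).choose m
      = ∑ m ∈ Icc k n, (n+1).choose (m+1) := by
    rw [← Finset.image_add_right_Icc k n 1]
    rw [Finset.sum_image (by intro a _ b _ h; beta_reduce at h; omega)]
  rw [h1]
  have h2 : ∀ m ∈ Icc k n, (n+1).choose (m+1) = n.choose m + n.choose (m+1) :=
    fun m _ => Nat.choose_succ_succ n m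
  rw [Finset.sum_congr rfl h2, Finset.sum_add_distrib]
  have h3 : ∑ m ∈ Icc k n, n.choose (m+1) = ∑ m ∈ Icc (k+1) n, n.choose m := by
    have h4 : ∑ m ∈ Icc k n, n.choose (m+1) = ∑ m ∈ Icc (k+1) (n+1), n.choose m := by
      rw [← Finset.image_add_right_Icc k n 1]
      rw [Finset.sum_image (by intro a _ b _ h; beta_reduce at h; omega)]
    rw [h4]
    rcases le_or_gt (k+1) (n+1) with h | h
    · rw [Finset.sum_Icc_succ_top h, Nat.choose_succ_self, add_zero]
    · rw [Finset.Icc_eq_empty (by omega), Finset.Icc_eq_empty (by omega)]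
  rw [h3, add_comm]

/-- Split off the bottom element of a tail sum. -/
lemma S_bot (n k : ℕ) (h : k ≤ n) :
    ∑ m ∈ Icc k n, n.choose m = n.choose k + ∑ m ∈ Icc (k+1) n, n.choose m := by
  rw [Finset.Icc_eq_cons_Ioc h, Finset.sum_cons, ← Finset.Icc_add_one_left_eq_Ioc]

/-- Decreasing binomial coefficients past the middle. -/
lemma choose_lt (n m : ℕ) (hn : n + 2 ≤ 2 * (m+1)) (hmn : m + 1 ≤ n) :
    n.choose (m+1) < n.choose m := by
  have key : n.choose (m+1) * (m+1) = n.choose m * (n - m) := Nat.choose_succ_right_eq n m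
  have hpos : 0 < n.choose m := Nat.choose_pos (by omega)
  have hlt : n.choose m * (n - m) < n.choose m * (m+1) :=
    mul_lt_mul_of_pos_left (by omega) hpos
  have : n.choose (m+1) * (m+1) < n.choose m * (m+1) := by omega
  exact Nat.lt_of_mul_lt_mul_right this

/-- One double-step strictly increases the tail sum relative to quadrupling. -/
lemma S_step (n m : ℕ) (hn : n + 2 ≤ 2 * (m+1)) (hmn : m + 1 ≤ n) :
    4 * (∑ i ∈ Icc (m+1) n, n.choose i) < ∑ i ∈ Icc (m+2) (n+2), (n+2).choose i := by
  have e1 : ∑ i ∈ Icc (m+2) (n+2), (n+2).choose i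
      = (∑ i ∈ Icc (m+2) (n+1), (n+1).choose i) + ∑ i ∈ Icc (m+1) (n+1), (n+1).choose i :=
    S_pascal (n+1) (m+1)
  have e2 : ∑ i ∈ Icc (m+2) (n+1), (n+1).choose i
      = (∑ i ∈ Icc (m+2) n, n.choose i) + ∑ i ∈ Icc (m+1) n, n.choose i :=
    S_pascal n (m+1)
  have e3 : ∑ i ∈ Icc (m+1) (n+1), (n+1).choose i
      = (∑ i ∈ Icc (m+1) n, n.choose i) + ∑ i ∈ Icc m n, n.choose i :=
    S_pascal n m
  have e4 : ∑ i ∈ Icc (m+1) n, n.choose i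
      = n.choose (m+1) + ∑ i ∈ Icc (m+2) n, n.choose i := S_bot n (m+1) hmn
  have e5 : ∑ i ∈ Icc m n, n.choose i
      = n.choose m + ∑ i ∈ Icc (m+1) n, n.choose i := S_bot n m (by omega)
  have hc : n.choose (m+1) < n.choose m := choose_lt n m hn hmn
  omega

/-- The main natural-number inequality, by induction on d. -/
lemma S_main (j x : ℕ) (hj2 : j + 2 ≤ 2 * x) (hx2 : x ≤ j) :
    ∀ d : ℕ, 1 ≤ d →
      4 ^ d * (∑ m ∈ Icc x j, j.choose m) < ∑ m ∈ Icc (x+d) (j+2*d), (j+2*d).choose m := by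
  have hx1 : 1 ≤ x := by omega
  intro d
  induction d with
  | zero => omega
  | succ d ih =>
    intro _
    rcases Nat.eq_or_lt_of_le (Nat.one_le_iff_ne_zero.mpr (Nat.succ_ne_zero d)) with h | h
    · -- d + 1 = 1, i.e. d = 0
      have hd0 : d = 0 := by omega
      subst hd0
      have := S_step j (x-1) (by omega) (by omega)
      have hx' : x - 1 + 1 = x := by omega
      rw [hx'] at this
      have hx'' : x - 1 + 2 = x + 1 := by omega
      rw [hx''] at this
      simpa using this
    · have hd1 : 1 ≤ d := by omega
      have ih' := ih hd1
      have step := S_step (j + 2*d) (x + d - 1) (by omega) (by omega)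
      have h1 : x + d - 1 + 1 = x + d := by omega
      have h2 : x + d - 1 + 2 = x + (d+1) := by omega
      rw [h1, h2] at step
      have h3 : j + 2*d + 2 = j + 2*(d+1) := by omega
      rw [h3] at step
      calc 4 ^ (d+1) * (∑ m ∈ Icc x j, j.choose m)
          = 4 * (4 ^ d * (∑ m ∈ Icc x j, j.choose m)) := by ring
        _ < 4 * (∑ m ∈ Icc (x+d) (j+2*d), (j+2*d).choose m) := by omega
        _ < ∑ m ∈ Icc (x+(d+1)) (j+2*(d+1)), (j+2*(d+1)).choose m := step

/-- binomGE at p = 1/2 as a sum of binomial coefficients over 2^n. -/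
lemma binomGE_half (n k : ℕ) :
    binomGE n k (1/2) = (∑ m ∈ Icc k n, (n.choose m : ℝ)) / 2 ^ n := by
  unfold binomGE binomPMF
  rw [Finset.sum_div]
  apply Finset.sum_congr rfl
  intro m hm
  have hmn : m ≤ n := (Finset.mem_Icc.mp hm).2
  have : (1:ℝ) - 1/2 = 1/2 := by norm_num
  rw [this, mul_assoc, ← pow_add, Nat.add_sub_cancel' hmn]
  rw [one_div_pow, mul_one_div]

theorem struck_beats_random_even (j d x : ℕ) (hj : 0 < j) (hje : Even j)
    (hd : 1 ≤ d) (hx1 : j / 2 + 1 ≤ x) (hx2 : x ≤ j) :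
    binomGE (j + 2 * d) (x + d) (1 / 2) > binomGE j x (1 / 2) := by
  obtain ⟨m, hm⟩ := hje
  have hj2 : j + 2 ≤ 2 * x := by omega
  have key := S_main j x hj2 hx2 d hd
  rw [binomGE_half, binomGE_half]
  rw [gt_iff_lt, div_lt_div_iff₀ (by positivity) (by positivity)]
  push_cast
  have h2 : (2:ℝ) ^ (j + 2*d) = 2 ^ j * 4 ^ d := by
    rw [pow_add, pow_mul]; norm_num
  have hcast : ((4:ℝ) ^ d * ∑ m ∈ Icc x j, (j.choose m : ℝ))
      < ∑ m ∈ Icc (x+d) (j+2*d), ((j+2*d).choose m : ℝ) := by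
    exact_mod_cast key
  have h2pos : (0:ℝ) < 2 ^ j := by positivity
  have h4 := mul_lt_mul_of_pos_right hcast h2pos
  calc (∑ m ∈ Icc x j, (j.choose m : ℝ)) * 2 ^ (j + 2*d)
      = (4 ^ d * ∑ m ∈ Icc x j, (j.choose m : ℝ)) * 2 ^ j := by rw [h2]; ring
    _ < (∑ m ∈ Icc (x+d) (j+2*d), ((j+2*d).choose m : ℝ)) * 2 ^ j := h4
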